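/- Let G = ℝ^d ⊕ so(d) with group law (x,A)·(y,B) = (x+y, A+B+(x⊗y−y⊗x)/2), and let ξ_1, …, ξ_k be i.i.d. G-valued random variables, ξ_i = (x_i, A_i), with E[x_i] = 0, E[|x_i|^4] < ∞ and E[|A_i|^2] < ∞. Let (S_k, Γ_k) = ξ_1 · ξ_2 ⋯ ξ_k. Then E[|S_k|^4] = O(k^2) and E[|Γ_k|^2] = O(k^2); consequently E[‖(S_k, Γ_k)‖^4] = O(k^2) for the homogeneous norm ‖(x,A)‖ = max(|x|, |A|^{1/2}). -/

import Mathlib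

open MeasureTheory ProbabilityTheory

/-- Outer (tensor) product of two vectors. -/
def outer {d : ℕ} (v w : Fin d → ℝ) : Fin d → Fin d → ℝ := fun i j => v i * w j

/-- Group law on `ℝ^d ⊕ so(d)` in log-coordinates:
`(x, A) · (y, B) = (x + y, A + B + (x⊗y − y⊗x)/2)`. -/
noncomputable def gmul {d : ℕ} (g h : (Fin d → ℝ) × (Fin d → Fin d → ℝ)) :
    (Fin d → ℝ) × (Fin d → Fin d → ℝ) :=
  (g.1 + h.1, g.2 + h.2 + (1 / 2 : ℝ) • (outer g.1 h.1 - outer h.1 g.1))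

/-- The homogeneous norm `‖(x, A)‖ = max(|x|, |A|^{1/2})`. -/
noncomputable def gnorm {d : ℕ} (g : (Fin d → ℝ) × (Fin d → Fin d → ℝ)) : ℝ :=
  max ‖g.1‖ (Real.sqrt ‖g.2‖)

/-! Write `ξ_i = (x_i, A_i)`. Then `S_k = ∑ x_i` and
`Γ_k = ∑ A_i + ½ ∑_{i<j} (x_i ⊗ x_j − x_j ⊗ x_i)`, so every entry of the double sum, like the
cross term of `S_k²`, is a sum of products `x_i^a x_j^b` over `i < j`. These products are
orthogonal in `L²`: in `E[x_i^a x_j^b x_{i'}^c x_{j'}^e]` with `(i, j) ≠ (i', j')` some index occurs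
only once, and that centred factor is independent of the other three. Hence such a sum has second
moment `O(k²)`; this gives `E|Γ_k|² = O(k²)`, and together with
`S_k⁴ ≤ 2k ∑ x_i⁴ + 8 (∑_{i<j} x_i x_j)²` also `E|S_k|⁴ = O(k²)`. Finally
`‖(x, A)‖⁴ ≤ |x|⁴ + |A|²`. -/

open Finset

lemma sq_sum_range_eq_add_two_mul {R : Type*} [CommRing R] (f : ℕ → R) (k : ℕ) :
    (∑ n ∈ range k, f n) ^ 2 =
      ∑ n ∈ range k, f n ^ 2 + 2 * ∑ j ∈ range k, ∑ i ∈ range j, f i * f j := by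
  induction k with
  | zero => simp
  | succ k ih =>
    rw [sum_range_succ, sum_range_succ (fun n => f n ^ 2),
      sum_range_succ (fun j => ∑ i ∈ range j, f i * f j), ← sum_mul, add_sq, ih]
    ring

lemma pi_norm_pow_le_sum {ι E : Type*} [Fintype ι] [SeminormedAddCommGroup E] (v : ι → E)
    {m : ℕ} (hm : m ≠ 0) : ‖v‖ ^ m ≤ ∑ i, ‖v i‖ ^ m := by
  rcases isEmpty_or_nonempty ι with hι | hι
  · simp [Subsingleton.elim v 0, hm]
  obtain ⟨i, hi⟩ := Finite.exists_max fun i => ‖v i‖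
  calc ‖v‖ ^ m ≤ ‖v i‖ ^ m := by
        gcongr; exact (pi_norm_le_iff_of_nonneg (norm_nonneg _)).2 hi
    _ ≤ ∑ j, ‖v j‖ ^ m :=
        single_le_sum (f := fun j => ‖v j‖ ^ m) (fun j _ => by positivity) (mem_univ i)

lemma apply_pow_four_le_norm_pow_four {ι : Type*} [Fintype ι] (v : ι → ℝ) (a : ι) :
    v a ^ 4 ≤ ‖v‖ ^ 4 := by
  rw [← Even.pow_abs (by decide), ← Real.norm_eq_abs]
  gcongr
  exact norm_le_pi_norm v a

def pairSum {ι : Type*} (x : ℕ → ι → ℝ) (k : ℕ) (a b : ι) : ℝ :=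
  ∑ j ∈ range k, ∑ i ∈ range j, x i a * x j b

def areaSum {d : ℕ} (x : ℕ → Fin d → ℝ) (k : ℕ) : Fin d → Fin d → ℝ :=
  ∑ j ∈ range k, ∑ i ∈ range j, (outer (x i) (x j) - outer (x j) (x i))

lemma areaSum_apply {d : ℕ} (x : ℕ → Fin d → ℝ) (k : ℕ) (a b : Fin d) :
    areaSum x k a b = pairSum x k a b - pairSum x k b a := by
  simp only [areaSum, pairSum, outer, Finset.sum_apply, Pi.sub_apply, ← sum_sub_distrib]
  exact sum_congr rfl fun j _ => sum_congr rfl fun i _ => by ring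

lemma norm_areaSum_sq_le {d : ℕ} (x : ℕ → Fin d → ℝ) (k : ℕ) :
    ‖areaSum x k‖ ^ 2 ≤ ∑ a, ∑ b, (2 * pairSum x k a b ^ 2 + 2 * pairSum x k b a ^ 2) := by
  refine (pi_norm_pow_le_sum _ two_ne_zero).trans <| sum_le_sum fun a _ =>
    (pi_norm_pow_le_sum _ two_ne_zero).trans <| sum_le_sum fun b _ => ?_
  rw [Real.norm_eq_abs, sq_abs, areaSum_apply]
  nlinarith [sq_nonneg (pairSum x k a b + pairSum x k b a)]

lemma gnorm_pow_four_le {d : ℕ} (g : (Fin d → ℝ) × (Fin d → Fin d → ℝ)) :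
    gnorm g ^ 4 ≤ ‖g.1‖ ^ 4 + ‖g.2‖ ^ 2 := by
  have hs : √‖g.2‖ ^ 4 = ‖g.2‖ ^ 2 := by
    rw [show 4 = 2 * 2 from rfl, pow_mul, Real.sq_sqrt (norm_nonneg _)]
  rcases max_cases ‖g.1‖ √‖g.2‖ with ⟨h, _⟩ | ⟨h, _⟩ <;>
    rw [gnorm, h] <;> nlinarith [pow_nonneg (norm_nonneg g.1) 4, sq_nonneg ‖g.2‖]

lemma foldl_gmul_map_range {d : ℕ} (g : ℕ → (Fin d → ℝ) × (Fin d → Fin d → ℝ)) (k : ℕ) :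
    ((List.range k).map g).foldl gmul (0, 0) =
      (∑ n ∈ range k, (g n).1,
        ∑ n ∈ range k, (g n).2 + (1 / 2 : ℝ) • areaSum (fun n => (g n).1) k) := by
  induction k with
  | zero => simp [areaSum]
  | succ k ih =>
    rw [List.range_succ, List.map_append, List.foldl_append, ih]
    ext a b
    · simp [sum_range_succ, gmul]
    · simp only [one_div, areaSum, sum_sub_distrib, List.map_cons, List.map_nil, List.foldl_cons,
        gmul, List.foldl_nil, Pi.add_apply, Finset.sum_apply, Pi.smul_apply, Pi.sub_apply, outer,
        smul_eq_mul, sum_mul, mul_sum, sum_range_succ]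
      ring

section Moments

variable {Ω : Type*} [MeasurableSpace Ω] {μ : Measure Ω}

lemma MeasureTheory.MemLp.integrable_pow_four {f : Ω → ℝ} (hf : MemLp f 4 μ) :
    Integrable (fun ω => f ω ^ 4) μ := by
  convert hf.integrable_norm_pow (p := 4) (by norm_num) using 2 with ω
  rw [Real.norm_eq_abs, Even.pow_abs (by decide)]

lemma sq_mul_le_half_pow_four_add (a b : ℝ) : (a * b) ^ 2 ≤ (a ^ 4 + b ^ 4) / 2 := by
  nlinarith [sq_nonneg (a ^ 2 - b ^ 2)]

lemma MeasureTheory.MemLp.mul_of_four {f g : Ω → ℝ} (hf : MemLp f 4 μ) (hg : MemLp g 4 μ) :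
    MemLp (fun ω => f ω * g ω) 2 μ := by
  have hfg : AEStronglyMeasurable (fun ω => f ω * g ω) μ := hf.1.mul hg.1
  refine (memLp_two_iff_integrable_sq hfg).2 <|
    ((hf.integrable_pow_four.add hg.integrable_pow_four).div_const 2).mono' (hfg.pow 2) ?_
  filter_upwards with ω
  rw [Real.norm_eq_abs, abs_of_nonneg (sq_nonneg _)]
  exact sq_mul_le_half_pow_four_add _ _

lemma integral_mul_sq_le {f g : Ω → ℝ} (hf : MemLp f 4 μ) (hg : MemLp g 4 μ) :
    ∫ ω, (f ω * g ω) ^ 2 ∂μ ≤ (∫ ω, f ω ^ 4 ∂μ + ∫ ω, g ω ^ 4 ∂μ) / 2 := by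
  rw [← integral_add hf.integrable_pow_four hg.integrable_pow_four, ← integral_div]
  exact integral_mono_of_nonneg (ae_of_all _ fun _ => sq_nonneg _)
    ((hf.integrable_pow_four.add hg.integrable_pow_four).div_const 2)
    (ae_of_all _ fun _ => sq_mul_le_half_pow_four_add _ _)

lemma integral_sq_sum_of_orthogonal {κ : Type*} {s : Finset κ} {Z : κ → Ω → ℝ}
    (hZ : ∀ p ∈ s, MemLp (Z p) 2 μ)
    (horth : ∀ p ∈ s, ∀ q ∈ s, p ≠ q → ∫ ω, Z p ω * Z q ω ∂μ = 0) :
    ∫ ω, (∑ p ∈ s, Z p ω) ^ 2 ∂μ = ∑ p ∈ s, ∫ ω, Z p ω ^ 2 ∂μ := by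
  have hint : ∀ p ∈ s, ∀ q ∈ s, Integrable (fun ω => Z p ω * Z q ω) μ :=
    fun p hp q hq => (hZ p hp).integrable_mul (hZ q hq)
  simp_rw [sq, sum_mul_sum]
  rw [integral_finsetSum _ fun p hp => integrable_finsetSum _ fun q hq => hint p hp q hq]
  refine sum_congr rfl fun p hp => ?_
  rw [integral_finsetSum _ fun q hq => hint p hp q hq,
    sum_eq_single_of_mem p hp fun q hq hqp => horth p hp q hq hqp.symm]

end Moments

-- An index `⟨j, i⟩ ∈ (range k).sigma range` stands for the pair `i < j < k`.
lemma pairSum_eq_sum_sigma {ι : Type*} (x : ℕ → ι → ℝ) (k : ℕ) (a b : ι) :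
    pairSum x k a b = ∑ p ∈ (range k).sigma range, x p.2 a * x p.1 b :=
  sum_sigma' _ _ _

lemma card_sigma_range_le (k : ℕ) : #((range k).sigma range) ≤ k ^ 2 := by
  rw [card_sigma, sq]
  calc ∑ j ∈ range k, #(range j) ≤ ∑ _j ∈ range k, k :=
        sum_le_sum fun j hj => by simpa using (mem_range.1 hj).le
    _ = k * k := by simp

lemma sum_range_pow_four_le (y : ℕ → ℝ) (k : ℕ) :
    (∑ n ∈ range k, y n) ^ 4 ≤
      2 * k * ∑ n ∈ range k, y n ^ 4 + 8 * (∑ j ∈ range k, ∑ i ∈ range j, y i * y j) ^ 2 := by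
  have hQ : (∑ n ∈ range k, y n ^ 2) ^ 2 ≤ k * ∑ n ∈ range k, y n ^ 4 := by
    have := sq_sum_le_card_mul_sum_sq (s := range k) (f := fun n => y n ^ 2)
    simp only [card_range, ← pow_mul] at this
    exact this
  have hsq := sq_sum_range_eq_add_two_mul y k
  calc (∑ n ∈ range k, y n) ^ 4 = ((∑ n ∈ range k, y n) ^ 2) ^ 2 := by ring
    _ ≤ _ := by
      rw [hsq]
      nlinarith [sq_nonneg (∑ n ∈ range k, y n ^ 2 - 2 * ∑ j ∈ range k, ∑ i ∈ range j, y i * y j)]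

section Independent

variable {Ω ι : Type*} [MeasurableSpace Ω] {μ : Measure Ω} {V : ℕ → Ω → ι → ℝ}
  (hV : iIndepFun V μ) (hVm : ∀ n, Measurable (V n)) (hcent : ∀ n a, ∫ ω, V n ω a ∂μ = 0)
  (hmem : ∀ n a, MemLp (fun ω => V n ω a) 4 μ) {M : ℝ} (hM : ∀ n a, ∫ ω, V n ω a ^ 4 ∂μ ≤ M)

include hmem in
lemma memLp_pairSum (k : ℕ) (a b : ι) : MemLp (fun ω => pairSum (V · ω) k a b) 2 μ :=
  memLp_finsetSum _ fun j _ => memLp_finsetSum _ fun i _ => (hmem i a).mul_of_four (hmem j b)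

include hV hVm hcent

lemma integral_mul_mul_mul_eq_zero_of_ne {i j l e : ℕ} (hei : e ≠ i) (hej : e ≠ j) (hel : e ≠ l)
    (a b c f : ι) :
    ∫ ω, V i ω a * V j ω b * V l ω c * V e ω f ∂μ = 0 := by
  classical
  have hdisj : Disjoint ({i, j, l} : Finset ℕ) {e} := by simp [hei, hej, hel]
  have hind := (hV.indepFun_finset _ _ hdisj hVm).comp
    (φ := fun v : ({i, j, l} : Finset ℕ) → ι → ℝ =>
      v ⟨i, by simp⟩ a * v ⟨j, by simp⟩ b * v ⟨l, by simp⟩ c)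
    (ψ := fun v : ({e} : Finset ℕ) → ι → ℝ => v ⟨e, by simp⟩ f) (by fun_prop) (by fun_prop)
  have := hind.integral_fun_mul_eq_mul_integral
    (((hVm i).eval.mul (hVm j).eval).mul (hVm l).eval).aestronglyMeasurable
    (hVm e).eval.aestronglyMeasurable
  simpa [hcent] using this

lemma integral_pair_mul_pair_eq_zero {i j i' j' : ℕ} (hij : i < j) (hij' : i' < j')
    (hne : i ≠ i' ∨ j ≠ j') (a b c f : ι) :
    ∫ ω, V i ω a * V j ω b * (V i' ω c * V j' ω f) ∂μ = 0 := by
  rcases (by omega : (i ≠ j ∧ i ≠ i' ∧ i ≠ j') ∨ (j ≠ i ∧ j ≠ i' ∧ j ≠ j'))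
    with ⟨h₁, h₂, h₃⟩ | ⟨h₁, h₂, h₃⟩
  · rw [← integral_mul_mul_mul_eq_zero_of_ne hV hVm hcent h₁ h₂ h₃ b c f a]
    congr 1 with ω; ring
  · rw [← integral_mul_mul_mul_eq_zero_of_ne hV hVm hcent h₁ h₂ h₃ a c f b]
    congr 1 with ω; ring

include hmem hM

lemma integral_pairSum_sq_le (k : ℕ) (a b : ι) :
    ∫ ω, pairSum (V · ω) k a b ^ 2 ∂μ ≤ k ^ 2 * M := by
  have hM0 : 0 ≤ M := (integral_nonneg fun ω => by positivity).trans (hM 0 a)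
  have hlt : ∀ p ∈ (range k).sigma range, p.2 < p.1 := fun p hp => mem_range.1 (mem_sigma.1 hp).2
  have hne : ∀ p q : (_ : ℕ) × ℕ, p ≠ q → p.2 ≠ q.2 ∨ p.1 ≠ q.1 := by
    intro p q hpq
    by_contra! h
    exact hpq (Sigma.ext h.2 (heq_of_eq h.1))
  simp only [pairSum_eq_sum_sigma]
  rw [integral_sq_sum_of_orthogonal (fun p _ => (hmem p.2 a).mul_of_four (hmem p.1 b))
    fun p hp q hq hpq => integral_pair_mul_pair_eq_zero hV hVm hcent (hlt p hp) (hlt q hq)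
      (hne p q hpq) a b a b]
  calc ∑ p ∈ (range k).sigma range, ∫ ω, (V p.2 ω a * V p.1 ω b) ^ 2 ∂μ
      ≤ ∑ _p ∈ (range k).sigma range, M := sum_le_sum fun p _ =>
        (integral_mul_sq_le (hmem p.2 a) (hmem p.1 b)).trans (by linarith [hM p.2 a, hM p.1 b])
    _ ≤ k ^ 2 * M := by
      rw [sum_const, nsmul_eq_mul]
      gcongr
      exact_mod_cast card_sigma_range_le k

lemma integral_sum_pow_four_le (k : ℕ) (a : ι) :
    ∫ ω, (∑ n ∈ range k, V n ω a) ^ 4 ∂μ ≤ 10 * M * k ^ 2 := by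
  have hQ : Integrable (fun ω => ∑ n ∈ range k, V n ω a ^ 4) μ :=
    integrable_finsetSum _ fun n _ => (hmem n a).integrable_pow_four
  have hP : Integrable (fun ω => pairSum (V · ω) k a a ^ 2) μ :=
    (memLp_pairSum hmem k a a).integrable_sq
  calc ∫ ω, (∑ n ∈ range k, V n ω a) ^ 4 ∂μ
      ≤ ∫ ω, (2 * k * ∑ n ∈ range k, V n ω a ^ 4 + 8 * pairSum (V · ω) k a a ^ 2) ∂μ :=
        integral_mono_of_nonneg (ae_of_all _ fun ω => by positivity)
          ((hQ.const_mul _).add (hP.const_mul 8))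
          (ae_of_all _ fun ω => sum_range_pow_four_le (V · ω a) k)
    _ = 2 * k * ∑ n ∈ range k, ∫ ω, V n ω a ^ 4 ∂μ + 8 * ∫ ω, pairSum (V · ω) k a a ^ 2 ∂μ := by
        rw [integral_add (hQ.const_mul _) (hP.const_mul 8), integral_const_mul, integral_const_mul,
          integral_finsetSum _ fun n _ => (hmem n a).integrable_pow_four]
    _ ≤ 2 * k * ∑ _n ∈ range k, M + 8 * (k ^ 2 * M) := by
        gcongr
        · exact hM _ a
        · exact integral_pairSum_sq_le hV hVm hcent hmem hM k a a
    _ = 10 * M * k ^ 2 := by rw [sum_const, card_range, nsmul_eq_mul]; ring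

lemma integral_norm_sum_pow_four_le [Fintype ι] (k : ℕ) :
    ∫ ω, ‖∑ n ∈ range k, V n ω‖ ^ 4 ∂μ ≤ 10 * Fintype.card ι * M * k ^ 2 := by
  have hS : ∀ a, Integrable (fun ω => (∑ n ∈ range k, V n ω a) ^ 4) μ := fun a =>
    (memLp_finsetSum _ fun n _ => hmem n a).integrable_pow_four
  calc ∫ ω, ‖∑ n ∈ range k, V n ω‖ ^ 4 ∂μ ≤ ∫ ω, ∑ a, (∑ n ∈ range k, V n ω a) ^ 4 ∂μ := by
        refine integral_mono_of_nonneg (ae_of_all _ fun _ => by positivity)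
          (integrable_finsetSum _ fun a _ => hS a) (ae_of_all _ fun ω => ?_)
        refine (pi_norm_pow_le_sum _ four_ne_zero).trans_eq (sum_congr rfl fun a _ => ?_)
        rw [Finset.sum_apply, Real.norm_eq_abs, Even.pow_abs (by decide)]
    _ = ∑ a, ∫ ω, (∑ n ∈ range k, V n ω a) ^ 4 ∂μ := integral_finsetSum _ fun a _ => hS a
    _ ≤ ∑ _a : ι, 10 * M * k ^ 2 := sum_le_sum fun a _ =>
        integral_sum_pow_four_le hV hVm hcent hmem hM k a
    _ = 10 * Fintype.card ι * M * k ^ 2 := by rw [sum_const, card_univ, nsmul_eq_mul]; ring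

end Independent

section Walk

variable {Ω : Type*} [MeasurableSpace Ω] {μ : Measure Ω}

lemma integral_norm_sum_sq_le {E : Type*} [NormedAddCommGroup E] {A : ℕ → Ω → E}
    (hA : ∀ n, MemLp (A n) 2 μ) {M : ℝ} (hM : ∀ n, ∫ ω, ‖A n ω‖ ^ 2 ∂μ ≤ M) (k : ℕ) :
    ∫ ω, ‖∑ n ∈ range k, A n ω‖ ^ 2 ∂μ ≤ k ^ 2 * M := by
  have hint : ∀ n, Integrable (fun ω => ‖A n ω‖ ^ 2) μ := fun n =>
    (hA n).integrable_norm_pow (p := 2) two_ne_zero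
  calc ∫ ω, ‖∑ n ∈ range k, A n ω‖ ^ 2 ∂μ ≤ ∫ ω, k * ∑ n ∈ range k, ‖A n ω‖ ^ 2 ∂μ := by
        refine integral_mono_of_nonneg (ae_of_all _ fun _ => by positivity)
          ((integrable_finsetSum _ fun n _ => hint n).const_mul _) (ae_of_all _ fun ω => ?_)
        calc ‖∑ n ∈ range k, A n ω‖ ^ 2 ≤ (∑ n ∈ range k, ‖A n ω‖) ^ 2 := by
              gcongr; exact norm_sum_le _ _
          _ ≤ k * ∑ n ∈ range k, ‖A n ω‖ ^ 2 := by
              simpa using sq_sum_le_card_mul_sum_sq (s := range k) (f := fun n => ‖A n ω‖)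
    _ = k * ∑ n ∈ range k, ∫ ω, ‖A n ω‖ ^ 2 ∂μ := by
        rw [integral_const_mul, integral_finsetSum _ fun n _ => hint n]
    _ ≤ k * ∑ _n ∈ range k, M := by gcongr; exact hM _
    _ = k ^ 2 * M := by rw [sum_const, card_range, nsmul_eq_mul]; ring

lemma integral_norm_add_half_smul_sq_le {E : Type*} [NormedAddCommGroup E] [NormedSpace ℝ E]
    {X Y : Ω → E} (hX : MemLp X 2 μ) (hY : MemLp Y 2 μ) :
    ∫ ω, ‖X ω + (1 / 2 : ℝ) • Y ω‖ ^ 2 ∂μ ≤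
      2 * ∫ ω, ‖X ω‖ ^ 2 ∂μ + 1 / 2 * ∫ ω, ‖Y ω‖ ^ 2 ∂μ := by
  have hX2 := hX.integrable_norm_pow (p := 2) two_ne_zero
  have hY2 := hY.integrable_norm_pow (p := 2) two_ne_zero
  rw [← integral_const_mul, ← integral_const_mul,
    ← integral_add (hX2.const_mul _) (hY2.const_mul _)]
  refine integral_mono_of_nonneg (ae_of_all _ fun _ => by positivity)
    ((hX2.const_mul _).add (hY2.const_mul _)) (ae_of_all _ fun ω => ?_)
  have htri : ‖X ω + (1 / 2 : ℝ) • Y ω‖ ≤ ‖X ω‖ + 1 / 2 * ‖Y ω‖ := by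
    refine (norm_add_le _ _).trans_eq ?_
    rw [norm_smul, Real.norm_of_nonneg (by norm_num)]
  nlinarith [norm_nonneg (X ω + (1 / 2 : ℝ) • Y ω), sq_nonneg (‖X ω‖ - 1 / 2 * ‖Y ω‖)]

lemma integral_gnorm_pow_four_le {d : ℕ} {X : Ω → Fin d → ℝ} {Y : Ω → Fin d → Fin d → ℝ}
    (hX : MemLp X 4 μ) (hY : MemLp Y 2 μ) :
    ∫ ω, gnorm (X ω, Y ω) ^ 4 ∂μ ≤ ∫ ω, ‖X ω‖ ^ 4 ∂μ + ∫ ω, ‖Y ω‖ ^ 2 ∂μ := by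
  have hX4 := hX.integrable_norm_pow (p := 4) four_ne_zero
  have hY2 := hY.integrable_norm_pow (p := 2) two_ne_zero
  rw [← integral_add hX4 hY2]
  exact integral_mono_of_nonneg
    (ae_of_all _ fun _ => pow_nonneg ((norm_nonneg _).trans (le_max_left _ _)) 4)
    (hX4.add hY2) (ae_of_all _ fun ω => gnorm_pow_four_le (X ω, Y ω))

variable {d : ℕ} {V : ℕ → Ω → Fin d → ℝ} (hV : iIndepFun V μ) (hVm : ∀ n, Measurable (V n))
  (hcent : ∀ n a, ∫ ω, V n ω a ∂μ = 0) (hmem : ∀ n a, MemLp (fun ω => V n ω a) 4 μ)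
  {M : ℝ} (hM : ∀ n a, ∫ ω, V n ω a ^ 4 ∂μ ≤ M)
include hmem

lemma memLp_areaSum (k : ℕ) : MemLp (fun ω => areaSum (V · ω) k) 2 μ :=
  memLp_pi_iff.2 fun a => memLp_pi_iff.2 fun b => by
    simp only [areaSum_apply]
    exact (memLp_pairSum hmem k a b).sub (memLp_pairSum hmem k b a)

include hV hVm hcent hM

lemma integral_norm_areaSum_sq_le (k : ℕ) :
    ∫ ω, ‖areaSum (V · ω) k‖ ^ 2 ∂μ ≤ 4 * d ^ 2 * M * k ^ 2 := by
  have hP : ∀ a b, Integrable (fun ω => pairSum (V · ω) k a b ^ 2) μ := fun a b =>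
    (memLp_pairSum hmem k a b).integrable_sq
  have hPP : ∀ a b, Integrable
      (fun ω => 2 * pairSum (V · ω) k a b ^ 2 + 2 * pairSum (V · ω) k b a ^ 2) μ := fun a b =>
    ((hP a b).const_mul 2).add ((hP b a).const_mul 2)
  calc ∫ ω, ‖areaSum (V · ω) k‖ ^ 2 ∂μ
      ≤ ∫ ω, ∑ a, ∑ b, (2 * pairSum (V · ω) k a b ^ 2 + 2 * pairSum (V · ω) k b a ^ 2) ∂μ :=
        integral_mono_of_nonneg (ae_of_all _ fun _ => by positivity)
          (integrable_finsetSum _ fun a _ => integrable_finsetSum _ fun b _ => hPP a b)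
          (ae_of_all _ fun ω => norm_areaSum_sq_le (V · ω) k)
    _ = ∑ a, ∑ b, (2 * ∫ ω, pairSum (V · ω) k a b ^ 2 ∂μ
          + 2 * ∫ ω, pairSum (V · ω) k b a ^ 2 ∂μ) := by
        rw [integral_finsetSum _ fun a _ => integrable_finsetSum _ fun b _ => hPP a b]
        refine sum_congr rfl fun a _ => ?_
        rw [integral_finsetSum _ fun b _ => hPP a b]
        refine sum_congr rfl fun b _ => ?_
        rw [integral_add ((hP a b).const_mul 2) ((hP b a).const_mul 2), integral_const_mul,
          integral_const_mul]
    _ ≤ ∑ _a : Fin d, ∑ _b : Fin d, (2 * (k ^ 2 * M) + 2 * (k ^ 2 * M)) := by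
        gcongr with a _ b _ <;> exact integral_pairSum_sq_le hV hVm hcent hmem hM k _ _
    _ = 4 * d ^ 2 * M * k ^ 2 := by simp only [sum_const, card_univ, Fintype.card_fin]; ring

variable {A : ℕ → Ω → Fin d → Fin d → ℝ} (hA : ∀ n, MemLp (A n) 2 μ) {MA : ℝ}
  (hMA : ∀ n, ∫ ω, ‖A n ω‖ ^ 2 ∂μ ≤ MA)
include hA hMA

lemma integral_norm_walk_snd_sq_le (k : ℕ) :
    ∫ ω, ‖∑ n ∈ range k, A n ω + (1 / 2 : ℝ) • areaSum (V · ω) k‖ ^ 2 ∂μ ≤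
      (2 * MA + 2 * d ^ 2 * M) * k ^ 2 := by
  have hsum := integral_norm_sum_sq_le hA hMA k
  have harea := integral_norm_areaSum_sq_le hV hVm hcent hmem hM k
  have hsumA : MemLp (fun ω => ∑ n ∈ range k, A n ω) 2 μ := memLp_finsetSum _ fun n _ => hA n
  have := integral_norm_add_half_smul_sq_le hsumA (memLp_areaSum hmem k)
  linarith

lemma integral_gnorm_walk_pow_four_le (k : ℕ) :
    ∫ ω, gnorm (∑ n ∈ range k, V n ω,
        ∑ n ∈ range k, A n ω + (1 / 2 : ℝ) • areaSum (V · ω) k) ^ 4 ∂μ ≤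
      (10 * d * M + 2 * MA + 2 * d ^ 2 * M) * k ^ 2 := by
  have hfst := integral_norm_sum_pow_four_le hV hVm hcent hmem hM k
  have hsnd := integral_norm_walk_snd_sq_le hV hVm hcent hmem hM hA hMA k
  have hsumV : MemLp (fun ω => ∑ n ∈ range k, V n ω) 4 μ :=
    memLp_finsetSum _ fun n _ => memLp_pi_iff.2 (hmem n)
  have hsumA : MemLp (fun ω => ∑ n ∈ range k, A n ω) 2 μ := memLp_finsetSum _ fun n _ => hA n
  have hwalk : MemLp (fun ω => ∑ n ∈ range k, A n ω + (1 / 2 : ℝ) • areaSum (V · ω) k) 2 μ :=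
    hsumA.add ((memLp_areaSum hmem k).const_smul (1 / 2 : ℝ))
  have := integral_gnorm_pow_four_le hsumV hwalk
  rw [Fintype.card_fin] at hfst
  linarith

end Walk

theorem step2_walk_moment_bound_general
    {Ω : Type*} [MeasurableSpace Ω] (μ : Measure Ω)
    (d : ℕ) (ξ : ℕ → Ω → (Fin d → ℝ) × (Fin d → Fin d → ℝ))
    (hmeas : ∀ n, Measurable (ξ n))
    (hindep : iIndepFun ξ μ)
    (hident : ∀ n, IdentDistrib (ξ n) (ξ 0) μ μ)
    (hcentered : ∀ l : Fin d, ∫ ω, (ξ 0 ω).1 l ∂μ = 0)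
    (hx4 : Integrable (fun ω => ‖(ξ 0 ω).1‖ ^ 4) μ)
    (hA2 : Integrable (fun ω => ‖(ξ 0 ω).2‖ ^ 2) μ)
    (W : ℕ → Ω → (Fin d → ℝ) × (Fin d → Fin d → ℝ))
    (hW : ∀ k ω, W k ω = ((List.range k).map (fun n => ξ n ω)).foldl gmul (0, 0)) :
    ∃ C : ℝ, ∀ k : ℕ, 1 ≤ k →
      (∫ ω, ‖(W k ω).1‖ ^ 4 ∂μ) ≤ C * (k : ℝ) ^ 2 ∧
      (∫ ω, ‖(W k ω).2‖ ^ 2 ∂μ) ≤ C * (k : ℝ) ^ 2 ∧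
      (∫ ω, gnorm (W k ω) ^ 4 ∂μ) ≤ C * (k : ℝ) ^ 2 := by
  set M := ∫ ω, ‖(ξ 0 ω).1‖ ^ 4 ∂μ
  set MA := ∫ ω, ‖(ξ 0 ω).2‖ ^ 2 ∂μ
  have hVm : ∀ n, Measurable fun ω => (ξ n ω).1 := fun n => (hmeas n).fst
  have hV : iIndepFun (fun n ω => (ξ n ω).1) μ :=
    hindep.comp (fun _ => Prod.fst) fun _ => measurable_fst
  have hcent : ∀ n a, ∫ ω, (ξ n ω).1 a ∂μ = 0 := fun n a =>
    ((hident n).comp ((measurable_pi_apply a).comp measurable_fst)).integral_eq.trans (hcentered a)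
  have hmem : ∀ n a, MemLp (fun ω => (ξ n ω).1 a) 4 μ := fun n a =>
    (((hident n).comp measurable_fst).memLp_iff.2 <| (integrable_norm_rpow_iff
      (hVm 0).aestronglyMeasurable (by norm_num) (by norm_num)).1 (by simpa using hx4)).eval a
  have hM : ∀ n a, ∫ ω, (ξ n ω).1 a ^ 4 ∂μ ≤ M := fun n a => calc
    ∫ ω, (ξ n ω).1 a ^ 4 ∂μ = ∫ ω, (ξ 0 ω).1 a ^ 4 ∂μ :=
      ((hident n).comp (u := fun g => g.1 a ^ 4) (by fun_prop)).integral_eq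
    _ ≤ M := integral_mono (hmem 0 a).integrable_pow_four hx4 fun ω =>
      apply_pow_four_le_norm_pow_four _ a
  have hA : ∀ n, MemLp (fun ω => (ξ n ω).2) 2 μ := fun n =>
    ((hident n).comp measurable_snd).memLp_iff.2 <|
      (memLp_two_iff_integrable_sq_norm (hmeas 0).snd.aestronglyMeasurable).2 hA2
  have hMA : ∀ n, ∫ ω, ‖(ξ n ω).2‖ ^ 2 ∂μ ≤ MA := fun n =>
    ((hident n).comp (measurable_snd.norm.pow_const 2)).integral_eq.le
  have hM0 : 0 ≤ M := integral_nonneg fun _ => by positivity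
  have hMA0 : 0 ≤ MA := integral_nonneg fun _ => by positivity
  refine ⟨10 * d * M + 2 * MA + 2 * d ^ 2 * M, fun k _ => ?_⟩
  simp only [hW, foldl_gmul_map_range]
  have hfst := integral_norm_sum_pow_four_le hV hVm hcent hmem hM k
  have hsnd := integral_norm_walk_snd_sq_le hV hVm hcent hmem hM hA hMA k
  rw [Fintype.card_fin] at hfst
  refine ⟨hfst.trans ?_, hsnd.trans ?_,
    integral_gnorm_walk_pow_four_le hV hVm hcent hmem hM hA hMA k⟩
  all_goals gcongr; nlinarith

theorem step2_walk_moment_bound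
    {Ω : Type*} [MeasurableSpace Ω] (μ : Measure Ω) [IsProbabilityMeasure μ]
    (d : ℕ) (ξ : ℕ → Ω → (Fin d → ℝ) × (Fin d → Fin d → ℝ))
    (hmeas : ∀ n, Measurable (ξ n))
    (hindep : iIndepFun ξ μ)
    (hident : ∀ n, IdentDistrib (ξ n) (ξ 0) μ μ)
    (hcentered : ∀ l : Fin d, ∫ ω, (ξ 0 ω).1 l ∂μ = 0)
    (hx4 : Integrable (fun ω => ‖(ξ 0 ω).1‖ ^ 4) μ)
    (hA2 : Integrable (fun ω => ‖(ξ 0 ω).2‖ ^ 2) μ)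
    (W : ℕ → Ω → (Fin d → ℝ) × (Fin d → Fin d → ℝ))
    (hW : ∀ k ω, W k ω = ((List.range k).map (fun n => ξ n ω)).foldl gmul (0, 0)) :
    ∃ C : ℝ, ∀ k : ℕ, 1 ≤ k →
      (∫ ω, ‖(W k ω).1‖ ^ 4 ∂μ) ≤ C * (k : ℝ) ^ 2 ∧
      (∫ ω, ‖(W k ω).2‖ ^ 2 ∂μ) ≤ C * (k : ℝ) ^ 2 ∧
      (∫ ω, gnorm (W k ω) ^ 4 ∂μ) ≤ C * (k : ℝ) ^ 2 :=
  step2_walk_moment_bound_general μ d ξ hmeas hindep hident hcentered hx4 hA2 W hW
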